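/- Let n ≥ 3, ε > 0, and on ∂ℝⁿ₊ suppose ψ satisfies ∂ₙψ = −(1/(2(n−1)))∂ₙv_ε·S + (n/(n−2))·v_ε⁻¹·∂ₙv_ε·ψ, where S is a real-valued function on ∂ℝⁿ₊ satisfying ∂ₙS = −(2n/(n−2))v_ε⁻¹∂ₙv_ε·S (extended suitably), and the tangential trace relations ∂ₙS_{ab} = −(1/(n−1))∂ₙS·δ_{ab}. With ξₙ as in the second-variation formula (Proposition 'ξ'), one has on ∂ℝⁿ₊: ξₙ = −((n+2)/(2(n−2)))·v_ε·∂ₙv_ε·S² + (4n(n−1)/(n−2)²)·v_ε⁻¹·∂ₙv_ε·ψ². In particular, since ∂ₙv_ε < 0 on ∂ℝⁿ₊, −ξₙ ≥ ((n+2)/(2(n−2)))·v_ε·∂ₙv_ε·S² with the sign needed for the energy estimate. -/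

import Mathlib

open scoped BigOperators
open MeasureTheory

noncomputable section

abbrev E (n : ℕ) := EuclideanSpace ℝ (Fin n)

/-- Partial derivative in the `i`-th coordinate direction. -/
def pder {n : ℕ} (i : Fin n) (f : E n → ℝ) (x : E n) : ℝ :=
  fderiv ℝ f x (EuclideanSpace.single i 1)

/-- Euclidean Laplacian. -/
def lap {n : ℕ} (f : E n → ℝ) (x : E n) : ℝ :=
  ∑ i, pder i (pder i f) x

/-- The index of the last ("normal") coordinate `x_n`. -/
def nIdx (n : ℕ) (hn : 0 < n) : Fin n := ⟨n - 1, Nat.sub_lt hn one_pos⟩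

/-- The model function `v_ε` on the upper half-space. -/
def vE (n : ℕ) (hn : 0 < n) (ε : ℝ) (x : E n) : ℝ :=
  ε ^ (((n : ℝ) - 2) / 2) *
    ((ε + x (nIdx n hn)) ^ 2 + ∑ a ∈ Finset.univ.erase (nIdx n hn), x a ^ 2) ^
      (-(((n : ℝ) - 2) / 2))

/-- Divergence of a vector field. -/
def divV {n : ℕ} (V : E n → E n) (x : E n) : ℝ := ∑ i, pder i (fun z => V z i) x

/-- The conformal Killing operator `S_{ik} = ∂ᵢVₖ + ∂ₖVᵢ - (2/n)(div V)δ_{ik}`. -/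
def Smat {n : ℕ} (V : E n → E n) (i k : Fin n) (x : E n) : ℝ :=
  pder i (fun z => V z k) x + pder k (fun z => V z i) x -
    (2 / (n : ℝ)) * divV V x * (if i = k then 1 else 0)

/-- The correction term `ψ = Σ_l ∂_l v_ε · V_l + ((n-2)/(2n)) v_ε div V`. -/
def psiF (n : ℕ) (hn : 0 < n) (ε : ℝ) (V : E n → E n) (x : E n) : ℝ :=
  ∑ l, pder l (vE n hn ε) x * V x l +
    (((n : ℝ) - 2) / (2 * n)) * vE n hn ε x * divV V x

/-- The divergence term `ξ_i` from the second-variation formula (Proposition `ξ`),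
with `v = v_ε`, `ψ = psiF`, `S = Smat V` and `T = H - S`. -/
def xiF (n : ℕ) (hn : 0 < n) (ε : ℝ) (V : E n → E n)
    (H : Fin n → Fin n → E n → ℝ) (i : Fin n) (x : E n) : ℝ :=
  (∑ k, (2 * vE n hn ε x * psiF n hn ε V x * pder k (H i k) x
      - 2 * vE n hn ε x * pder k (psiF n hn ε V) x * H i k x
      - 2 * pder k (vE n hn ε) x * psiF n hn ε V x * H i k x
      - vE n hn ε x * psiF n hn ε V x * pder k (Smat V i k) x
      + pder k (fun y => vE n hn ε y * psiF n hn ε V y) x * Smat V i k x))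
  + (∑ k, ∑ l, (2 * vE n hn ε x * pder l (vE n hn ε) x * Smat V k l x * H k i x
      - (1 / 2) * vE n hn ε x ^ 2 * pder i (Smat V l k) x * H l k x
      + vE n hn ε x ^ 2 * pder l (Smat V k l) x * H k i x
      + (1 / 4) * vE n hn ε x ^ 2 * pder i (Smat V l k) x * Smat V l k x
      - (1 / 2) * vE n hn ε x ^ 2 * pder k (Smat V l k) x * Smat V i l x))
  + (∑ k, ∑ l, (-(vE n hn ε x * pder k (vE n hn ε) x * Smat V l k x * Smat V i l x)
      - (2 / ((n : ℝ) - 2)) * vE n hn ε x * pder k (vE n hn ε) x *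
          (H l k x - Smat V l k x) * (H l i x - Smat V l i x)))
  + (4 * ((n : ℝ) - 1) / ((n : ℝ) - 2)) *
      (-(∑ k, pder k (vE n hn ε) x * psiF n hn ε V x * Smat V i k x)
        + psiF n hn ε V x * pder i (psiF n hn ε V) x)

lemma pder_tangent_zero {n : ℕ} {ν a : Fin n} (hne : a ≠ ν) {f : E n → ℝ}
    (hf : ∀ y : E n, y ν = 0 → f y = 0) {x : E n} (hx : x ν = 0) :
    pder a f x = 0 := by
  by_cases hd : DifferentiableAt ℝ f x
  · set c : E n := EuclideanSpace.single a 1 with hc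
    have h1 : HasDerivAt (fun t : ℝ => t • c) c 0 := by
      simpa using (hasDerivAt_id (0:ℝ)).smul_const c
    have hL : HasDerivAt (fun t : ℝ => x + t • c) c 0 := h1.const_add x
    have hL0 : x + (0:ℝ) • c = x := by simp
    have hcomp : HasDerivAt (fun t : ℝ => f (x + t • c)) (fderiv ℝ f x c) 0 := by
      have hd' : HasFDerivAt f (fderiv ℝ f x) (x + (0:ℝ) • c) := by rw [hL0]; exact hd.hasFDerivAt
      exact hd'.comp_hasDerivAt 0 hL
    have hzero : (fun t : ℝ => f (x + t • c)) = fun _ => (0:ℝ) := by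
      funext t
      apply hf
      have : (x + t • c) ν = x ν + t * c ν := rfl
      rw [this, hx, hc, EuclideanSpace.single_apply]
      simp [Ne.symm hne]
    rw [hzero] at hcomp
    have := hcomp.unique (hasDerivAt_const 0 0)
    simpa [pder] using this
  · simp [pder, fderiv_zero_of_not_differentiableAt hd]

def wF (n : ℕ) (hn : 0 < n) (ε : ℝ) (x : E n) : ℝ :=
  (ε + x (nIdx n hn)) ^ 2 + ∑ a ∈ Finset.univ.erase (nIdx n hn), x a ^ 2

lemma vE_def' (n : ℕ) (hn : 0 < n) (ε : ℝ) :
    vE n hn ε = fun x => ε ^ (((n:ℝ)-2)/2) * wF n hn ε x ^ (-(((n:ℝ)-2)/2)) := rfl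

lemma coord_hasFDerivAt {n : ℕ} (i : Fin n) (x : E n) :
    HasFDerivAt (fun y : E n => y i) (EuclideanSpace.proj i (𝕜 := ℝ)) x :=
  (EuclideanSpace.proj i : E n →L[ℝ] ℝ).hasFDerivAt (x := x)

lemma coord_contDiff {n : ℕ} (i : Fin n) : ContDiff ℝ (⊤ : ℕ∞) (fun y : E n => y i) :=
  (EuclideanSpace.proj i : E n →L[ℝ] ℝ).contDiff

lemma sq_coord_hasFDerivAt {n : ℕ} (i : Fin n) (x : E n) (c : ℝ) :
    HasFDerivAt (fun y : E n => (c + y i) ^ 2)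
      ((2 * (c + x i)) • (EuclideanSpace.proj i : E n →L[ℝ] ℝ)) x := by
  have hb : HasFDerivAt (fun y : E n => c + y i)
      (EuclideanSpace.proj i (𝕜 := ℝ)) x := (coord_hasFDerivAt i x).const_add c
  have h := hb.mul hb
  simp only [pow_two]
  convert h using 1
  all_goals first | rfl | rw [two_mul, add_smul]

lemma wF_contDiff (n : ℕ) (hn : 0 < n) (ε : ℝ) : ContDiff ℝ (⊤ : ℕ∞) (wF n hn ε) := by
  unfold wF
  apply ContDiff.add
  · exact ((contDiff_const.add (coord_contDiff _)).pow 2)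
  · exact ContDiff.sum fun a _ => (coord_contDiff _).pow 2

lemma wF_pos {n : ℕ} (hn : 0 < n) {ε : ℝ} (hε : 0 < ε) (x : E n)
    (hx : x (nIdx n hn) = 0) : 0 < wF n hn ε x := by
  unfold wF
  rw [hx]
  have : (0:ℝ) ≤ ∑ a ∈ Finset.univ.erase (nIdx n hn), x a ^ 2 :=
    Finset.sum_nonneg fun a _ => sq_nonneg _
  nlinarith

lemma wF_hasFDerivAt (n : ℕ) (hn : 0 < n) (ε : ℝ) (x : E n) :
    HasFDerivAt (wF n hn ε)
      ((2*(ε + x (nIdx n hn))) • EuclideanSpace.proj (nIdx n hn) +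
        ∑ a ∈ Finset.univ.erase (nIdx n hn),
          (2 * x a) • (EuclideanSpace.proj a : E n →L[ℝ] ℝ)) x := by
  unfold wF
  apply HasFDerivAt.add
  · exact sq_coord_hasFDerivAt _ x ε
  · apply HasFDerivAt.fun_sum
    intro a _
    simpa using sq_coord_hasFDerivAt a x 0

lemma vE_contDiffAt {n : ℕ} (hn : 0 < n) {ε : ℝ} (hε : 0 < ε) {x : E n}
    (hx : x (nIdx n hn) = 0) : ContDiffAt ℝ (⊤ : ℕ∞) (vE n hn ε) x := by
  rw [vE_def']
  have h := ((wF_contDiff n hn ε).contDiffAt (x := x)).rpow_const_of_ne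
    (p := -(((n:ℝ)-2)/2)) (ne_of_gt (wF_pos hn hε x hx))
  exact contDiffAt_const.mul h

lemma vE_pos {n : ℕ} (hn : 0 < n) {ε : ℝ} (hε : 0 < ε) {x : E n}
    (hx : x (nIdx n hn) = 0) : 0 < vE n hn ε x :=
  mul_pos (Real.rpow_pos_of_pos hε _) (Real.rpow_pos_of_pos (wF_pos hn hε x hx) _)

lemma pder_nu_vE {n : ℕ} (hn : 0 < n) {ε : ℝ} (hε : 0 < ε) {x : E n}
    (hx : x (nIdx n hn) = 0) :
    pder (nIdx n hn) (vE n hn ε) x =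
      ε ^ (((n:ℝ)-2)/2) * ((-(((n:ℝ)-2)/2)) * wF n hn ε x ^ (-(((n:ℝ)-2)/2) - 1)) *
        (2 * ε) := by
  have hw := wF_hasFDerivAt n hn ε x
  have hne : wF n hn ε x ≠ 0 := ne_of_gt (wF_pos hn hε x hx)
  have h1 := hw.rpow_const (p := -(((n:ℝ)-2)/2)) (Or.inl hne)
  have h3 : HasFDerivAt (vE n hn ε)
      ((ε ^ (((n:ℝ)-2)/2)) •
        (((-(((n:ℝ)-2)/2)) * wF n hn ε x ^ (-(((n:ℝ)-2)/2) - 1)) •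
          ((2*(ε + x (nIdx n hn))) • EuclideanSpace.proj (nIdx n hn) +
            ∑ a ∈ Finset.univ.erase (nIdx n hn),
              (2 * x a) • (EuclideanSpace.proj a : E n →L[ℝ] ℝ)))) x := by
    rw [vE_def']
    exact h1.const_mul _
  rw [pder, h3.fderiv]
  have hproj : ∀ j : Fin n, (EuclideanSpace.proj j : E n →L[ℝ] ℝ)
      (EuclideanSpace.single (nIdx n hn) 1) = if j = nIdx n hn then 1 else 0 := by
    intro j
    rw [PiLp.proj_apply, EuclideanSpace.single_apply]
  simp only [ContinuousLinearMap.coe_smul', Pi.smul_apply, ContinuousLinearMap.add_apply,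
    ContinuousLinearMap.coe_sum', Finset.sum_apply, smul_eq_mul]
  rw [Finset.sum_eq_zero (fun a ha => by
    rw [hproj a]
    simp [(Finset.mem_erase.mp ha).1]), hproj (nIdx n hn)]
  rw [hx]
  simp
  ring

lemma pder_nu_vE_neg {n : ℕ} (hn3 : 3 ≤ n) (hn : 0 < n) {ε : ℝ} (hε : 0 < ε) {x : E n}
    (hx : x (nIdx n hn) = 0) :
    pder (nIdx n hn) (vE n hn ε) x < 0 := by
  rw [pder_nu_vE hn hε hx]
  have hp : 0 < ((n:ℝ)-2)/2 := by
    have : (3:ℝ) ≤ n := by exact_mod_cast hn3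
    linarith
  have h1 : 0 < ε ^ (((n:ℝ)-2)/2) := Real.rpow_pos_of_pos hε _
  have h2 : 0 < wF n hn ε x ^ (-(((n:ℝ)-2)/2) - 1) :=
    Real.rpow_pos_of_pos (wF_pos hn hε x hx) _
  have h3 : 0 < ε ^ (((n:ℝ)-2)/2) * ((((n:ℝ)-2)/2) * wF n hn ε x ^ (-(((n:ℝ)-2)/2) - 1)) *
      (2 * ε) := mul_pos (mul_pos h1 (mul_pos hp h2)) (by linarith)
  nlinarith [h3]

lemma pder_differentiableAt {n : ℕ} {f : E n → ℝ} {x : E n}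
    (hf : ContDiffAt ℝ (⊤ : ℕ∞) f x) (l : Fin n) :
    DifferentiableAt ℝ (fun y => pder l f y) x := by
  have h1 : ContDiffAt ℝ 1 (fderiv ℝ f) x := hf.fderiv_right (WithTop.coe_le_coe.mpr le_top)
  have h2 := h1.differentiableAt one_ne_zero
  exact ((ContinuousLinearMap.apply ℝ ℝ
    (EuclideanSpace.single l 1)).differentiableAt).comp x h2

lemma divV_differentiableAt {n : ℕ} {V : E n → E n} (hV : ContDiff ℝ (⊤ : ℕ∞) V) (x : E n) :
    DifferentiableAt ℝ (divV V) x := by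
  unfold divV
  apply DifferentiableAt.fun_sum
  intro i _
  exact pder_differentiableAt (((coord_contDiff i).comp hV).contDiffAt) i

lemma psiF_differentiableAt {n : ℕ} (hn : 0 < n) {ε : ℝ} (hε : 0 < ε)
    {V : E n → E n} (hV : ContDiff ℝ (⊤ : ℕ∞) V) {x : E n} (hx : x (nIdx n hn) = 0) :
    DifferentiableAt ℝ (psiF n hn ε V) x := by
  unfold psiF
  apply DifferentiableAt.add
  · apply DifferentiableAt.fun_sum
    intro l _
    exact (pder_differentiableAt (vE_contDiffAt hn hε hx) l).mul
      ((((coord_contDiff l).comp hV).differentiable (by simp)).differentiableAt)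
  · exact ((differentiableAt_const _).mul
      ((vE_contDiffAt hn hε hx).differentiableAt (by simp))).mul (divV_differentiableAt hV x)


set_option maxHeartbeats 2000000 in
theorem xi_main (n : ℕ) (hn : 3 ≤ n) (hpos : 0 < n) (ε : ℝ) (hε : 0 < ε)
    (V : E n → E n) (hV : ContDiff ℝ (⊤ : ℕ∞) V)
    (H : Fin n → Fin n → E n → ℝ)
    (hHsymm : ∀ (i k : Fin n) (x : E n), H i k x = H k i x)
    (hHtr : ∀ x : E n, ∑ i, H i i x = 0)
    (hHn : ∀ (i : Fin n) (x : E n), H i (nIdx n hpos) x = 0)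
    (hVn : ∀ x : E n, x (nIdx n hpos) = 0 → V x (nIdx n hpos) = 0)
    (hVa : ∀ (x : E n) (a : Fin n), a ≠ nIdx n hpos →
      x (nIdx n hpos) = 0 → pder (nIdx n hpos) (fun z => V z a) x = 0)
    (hSnn : ∀ x : E n, x (nIdx n hpos) = 0 →
      pder (nIdx n hpos) (Smat V (nIdx n hpos) (nIdx n hpos)) x =
        -(2 * (n : ℝ) / ((n : ℝ) - 2)) * (vE n hpos ε x)⁻¹ *
          pder (nIdx n hpos) (vE n hpos ε) x *
          Smat V (nIdx n hpos) (nIdx n hpos) x)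
    (hSab : ∀ (a b : Fin n), a ≠ nIdx n hpos → b ≠ nIdx n hpos →
      ∀ x : E n, x (nIdx n hpos) = 0 →
        pder (nIdx n hpos) (Smat V a b) x =
          -(1 / ((n : ℝ) - 1)) *
            pder (nIdx n hpos) (Smat V (nIdx n hpos) (nIdx n hpos)) x *
            (if a = b then 1 else 0))
    (hpsi : ∀ x : E n, x (nIdx n hpos) = 0 →
      pder (nIdx n hpos) (psiF n hpos ε V) x =
        -(1 / (2 * ((n : ℝ) - 1))) * pder (nIdx n hpos) (vE n hpos ε) x *
            Smat V (nIdx n hpos) (nIdx n hpos) x +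
          ((n : ℝ) / ((n : ℝ) - 2)) * (vE n hpos ε x)⁻¹ *
            pder (nIdx n hpos) (vE n hpos ε) x * psiF n hpos ε V x) :
    ∀ x : E n, x (nIdx n hpos) = 0 →
      xiF n hpos ε V H (nIdx n hpos) x =
          -(((n : ℝ) + 2) / (2 * ((n : ℝ) - 2))) * vE n hpos ε x *
              pder (nIdx n hpos) (vE n hpos ε) x *
              Smat V (nIdx n hpos) (nIdx n hpos) x ^ 2 +
            (4 * (n : ℝ) * ((n : ℝ) - 1) / ((n : ℝ) - 2) ^ 2) * (vE n hpos ε x)⁻¹ *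
              pder (nIdx n hpos) (vE n hpos ε) x * psiF n hpos ε V x ^ 2 ∧
      -xiF n hpos ε V H (nIdx n hpos) x ≥
          (((n : ℝ) + 2) / (2 * ((n : ℝ) - 2))) * vE n hpos ε x *
            pder (nIdx n hpos) (vE n hpos ε) x *
            Smat V (nIdx n hpos) (nIdx n hpos) x ^ 2 := by
  intro x hx
  set ν : Fin n := nIdx n hpos with hνdef
  have hnR : (3:ℝ) ≤ (n:ℝ) := by exact_mod_cast hn
  have hn2 : ((n:ℝ) - 2) ≠ 0 := by linarith
  have hn1 : ((n:ℝ) - 1) ≠ 0 := by linarith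
  have hn0 : (n:ℝ) ≠ 0 := by linarith
  have hv0 : 0 < vE n hpos ε x := vE_pos hpos hε hx
  have hdvneg : pder ν (vE n hpos ε) x < 0 := pder_nu_vE_neg hn hpos hε hx
  -- H vanishing facts
  have hHν1 : ∀ i, H i ν = fun _ => (0:ℝ) := fun i => funext fun y => hHn i y
  have hHν2 : ∀ k, H ν k = fun _ => (0:ℝ) := fun k =>
    funext fun y => (hHsymm ν k y).trans (hHn k y)
  have hHν2x : ∀ k, H ν k x = 0 := fun k => by rw [hHν2]
  have hHν1x : ∀ k, H k ν x = 0 := fun k => hHn k x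
  have hpderH0 : ∀ k, pder k (H ν k) x = 0 := fun k => by
    rw [hHν2 k]; simp [pder]
  -- S symmetry
  have hSsymm : ∀ (i k : Fin n) (y : E n), Smat V i k y = Smat V k i y := by
    intro i k y
    simp only [Smat]
    rcases eq_or_ne i k with h | h
    · subst h; ring
    · rw [if_neg h, if_neg (Ne.symm h)]; ring
  -- S ν a vanishes on the boundary
  have hSν0 : ∀ a, a ≠ ν → ∀ y : E n, y ν = 0 → Smat V ν a y = 0 := by
    intro a ha y hy
    simp only [Smat]
    rw [if_neg (Ne.symm ha), hVa y a ha hy,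
      pder_tangent_zero ha (fun z hz => hVn z hz) hy]
    ring
  have hSν0x : ∀ a, a ≠ ν → Smat V ν a x = 0 := fun a ha => hSν0 a ha x hx
  have hSν0x' : ∀ a, a ≠ ν → Smat V a ν x = 0 := fun a ha =>
    (hSsymm a ν x).trans (hSν0x a ha)
  have hdSν : ∀ a, a ≠ ν → pder a (Smat V ν a) x = 0 := fun a ha =>
    pder_tangent_zero ha (fun y hy => hSν0 a ha y hy) hx
  -- traces
  have htr : ∑ k, Smat V k k x = 0 := by
    have hterm : ∀ k : Fin n, Smat V k k x =
        2 * pder k (fun z => V z k) x - (2/(n:ℝ)) * divV V x := by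
      intro k; simp [Smat]; ring
    rw [Finset.sum_congr rfl (fun k _ => hterm k), Finset.sum_sub_distrib,
      ← Finset.mul_sum, Finset.sum_const, Finset.card_univ, Fintype.card_fin,
      nsmul_eq_mul]
    show 2 * divV V x - (n:ℝ) * (2/(n:ℝ) * divV V x) = 0
    field_simp
    ring
  have htr' : ∑ a ∈ Finset.univ.erase ν, Smat V a a x = - Smat V ν ν x := by
    have h := htr
    rw [← Finset.sum_erase_add _ _ (Finset.mem_univ ν)] at h
    linarith
  have hHtr' : ∑ a ∈ Finset.univ.erase ν, H a a x = 0 := by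
    have h := hHtr x
    rw [← Finset.sum_erase_add _ _ (Finset.mem_univ ν)] at h
    rw [hHν1x ν] at h
    linarith
  -- product rule
  have hprod : pder ν (fun y => vE n hpos ε y * psiF n hpos ε V y) x =
      pder ν (vE n hpos ε) x * psiF n hpos ε V x +
        vE n hpos ε x * pder ν (psiF n hpos ε V) x := by
    have hdva : DifferentiableAt ℝ (vE n hpos ε) x :=
      (vE_contDiffAt hpos hε hx).differentiableAt (by simp)
    have hdψa : DifferentiableAt ℝ (psiF n hpos ε V) x :=
      psiF_differentiableAt hpos hε hV hx
    rw [pder, fderiv_fun_mul hdva hdψa]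
    simp only [ContinuousLinearMap.add_apply, ContinuousLinearMap.coe_smul',
      Pi.smul_apply, smul_eq_mul]
    rw [pder, pder]
    ring
  -- Sum 1
  have hSum1 : (∑ k, (2 * vE n hpos ε x * psiF n hpos ε V x * pder k (H ν k) x
      - 2 * vE n hpos ε x * pder k (psiF n hpos ε V) x * H ν k x
      - 2 * pder k (vE n hpos ε) x * psiF n hpos ε V x * H ν k x
      - vE n hpos ε x * psiF n hpos ε V x * pder k (Smat V ν k) x
      + pder k (fun y => vE n hpos ε y * psiF n hpos ε V y) x * Smat V ν k x))
      = -(vE n hpos ε x * psiF n hpos ε V x * pder ν (Smat V ν ν) x)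
        + (pder ν (vE n hpos ε) x * psiF n hpos ε V x
            + vE n hpos ε x * pder ν (psiF n hpos ε V) x) * Smat V ν ν x := by
    rw [← Finset.sum_erase_add _ _ (Finset.mem_univ ν)]
    rw [Finset.sum_eq_zero (fun k hk => by
      obtain ⟨hkν, -⟩ := Finset.mem_erase.mp hk
      rw [hpderH0 k, hHν2x k, hdSν k hkν, hSν0x k hkν]
      ring)]
    rw [hpderH0 ν, hHν2x ν, hprod]
    ring
  -- Sum 2
  have hSum2 : (∑ k, ∑ l, (2 * vE n hpos ε x * pder l (vE n hpos ε) x * Smat V k l x * H k ν x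
      - (1 / 2) * vE n hpos ε x ^ 2 * pder ν (Smat V l k) x * H l k x
      + vE n hpos ε x ^ 2 * pder l (Smat V k l) x * H k ν x
      + (1 / 4) * vE n hpos ε x ^ 2 * pder ν (Smat V l k) x * Smat V l k x
      - (1 / 2) * vE n hpos ε x ^ 2 * pder k (Smat V l k) x * Smat V ν l x))
      = (1/4) * vE n hpos ε x ^ 2 * pder ν (Smat V ν ν) x * Smat V ν ν x
        - (1/2) * vE n hpos ε x ^ 2 * pder ν (Smat V ν ν) x * Smat V ν ν x
        + (1/(4*((n:ℝ)-1))) * vE n hpos ε x ^ 2 * pder ν (Smat V ν ν) x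
            * Smat V ν ν x := by
    rw [← Finset.sum_erase_add _ _ (Finset.mem_univ ν)]
    have hinner_ν : (∑ l, (2 * vE n hpos ε x * pder l (vE n hpos ε) x * Smat V ν l x * H ν ν x
        - (1 / 2) * vE n hpos ε x ^ 2 * pder ν (Smat V l ν) x * H l ν x
        + vE n hpos ε x ^ 2 * pder l (Smat V ν l) x * H ν ν x
        + (1 / 4) * vE n hpos ε x ^ 2 * pder ν (Smat V l ν) x * Smat V l ν x
        - (1 / 2) * vE n hpos ε x ^ 2 * pder ν (Smat V l ν) x * Smat V ν l x))
        = (1/4) * vE n hpos ε x ^ 2 * pder ν (Smat V ν ν) x * Smat V ν ν x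
          - (1/2) * vE n hpos ε x ^ 2 * pder ν (Smat V ν ν) x * Smat V ν ν x := by
      rw [← Finset.sum_erase_add _ _ (Finset.mem_univ ν)]
      rw [Finset.sum_eq_zero (fun l hl => by
        obtain ⟨hlν, -⟩ := Finset.mem_erase.mp hl
        rw [hHν1x l, hHν2x ν, hSν0x l hlν, hSν0x' l hlν]
        ring)]
      rw [hHν2x ν]
      ring
    have hinner_b : ∀ b ∈ Finset.univ.erase ν,
        (∑ l, (2 * vE n hpos ε x * pder l (vE n hpos ε) x * Smat V b l x * H b ν x
        - (1 / 2) * vE n hpos ε x ^ 2 * pder ν (Smat V l b) x * H l b x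
        + vE n hpos ε x ^ 2 * pder l (Smat V b l) x * H b ν x
        + (1 / 4) * vE n hpos ε x ^ 2 * pder ν (Smat V l b) x * Smat V l b x
        - (1 / 2) * vE n hpos ε x ^ 2 * pder b (Smat V l b) x * Smat V ν l x))
        = (1/(2*((n:ℝ)-1))) * vE n hpos ε x ^ 2 * pder ν (Smat V ν ν) x * H b b x
          - (1/(4*((n:ℝ)-1))) * vE n hpos ε x ^ 2 * pder ν (Smat V ν ν) x
              * Smat V b b x := by
      intro b hb
      obtain ⟨hbν, -⟩ := Finset.mem_erase.mp hb
      rw [← Finset.sum_erase_add _ _ (Finset.mem_univ ν)]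
      rw [Finset.sum_eq_single b
        (fun l hl hlb => by
          obtain ⟨hlν, -⟩ := Finset.mem_erase.mp hl
          rw [hHν1x b, hSab l b hlν hbν x hx, hSν0x l hlν, if_neg hlb]
          ring)
        (fun hb' => absurd hb hb')]
      rw [hHν1x b, hHν2x b, hSν0x b hbν, hdSν b hbν,
        hSab b b hbν hbν x hx, if_pos rfl]
      field_simp
      ring
    rw [hinner_ν, Finset.sum_congr rfl hinner_b]
    rw [Finset.sum_sub_distrib, ← Finset.mul_sum, ← Finset.mul_sum, hHtr', htr']
    ring
  -- Sum 3
  have hSum3 : (∑ k, ∑ l, (-(vE n hpos ε x * pder k (vE n hpos ε) x * Smat V l k x * Smat V ν l x)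
      - (2 / ((n : ℝ) - 2)) * vE n hpos ε x * pder k (vE n hpos ε) x *
          (H l k x - Smat V l k x) * (H l ν x - Smat V l ν x)))
      = -(vE n hpos ε x * pder ν (vE n hpos ε) x * Smat V ν ν x ^ 2)
        - (2 / ((n : ℝ) - 2)) * vE n hpos ε x * pder ν (vE n hpos ε) x
            * Smat V ν ν x ^ 2 := by
    rw [← Finset.sum_erase_add _ _ (Finset.mem_univ ν)]
    have hinner : ∀ k : Fin n,
        (∑ l, (-(vE n hpos ε x * pder k (vE n hpos ε) x * Smat V l k x * Smat V ν l x)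
        - (2 / ((n : ℝ) - 2)) * vE n hpos ε x * pder k (vE n hpos ε) x *
            (H l k x - Smat V l k x) * (H l ν x - Smat V l ν x)))
        = -(vE n hpos ε x * pder k (vE n hpos ε) x * Smat V ν k x * Smat V ν ν x)
          - (2 / ((n : ℝ) - 2)) * vE n hpos ε x * pder k (vE n hpos ε) x *
              (H ν k x - Smat V ν k x) * (H ν ν x - Smat V ν ν x) := by
      intro k
      rw [← Finset.sum_erase_add _ _ (Finset.mem_univ ν)]
      rw [Finset.sum_eq_zero (fun l hl => by
        obtain ⟨hlν, -⟩ := Finset.mem_erase.mp hl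
        rw [hSν0x l hlν, hHν1x l, hSν0x' l hlν]
        ring)]
      ring
    rw [hinner ν, Finset.sum_congr rfl (fun k hk => hinner k)]
    rw [Finset.sum_eq_zero (fun k hk => by
      obtain ⟨hkν, -⟩ := Finset.mem_erase.mp hk
      rw [hSν0x k hkν, hHν2x k]
      ring)]
    rw [hHν2x ν]
    ring
  -- Sum 4
  have hSum4 : (∑ k, pder k (vE n hpos ε) x * psiF n hpos ε V x * Smat V ν k x)
      = pder ν (vE n hpos ε) x * psiF n hpos ε V x * Smat V ν ν x := by
    rw [← Finset.sum_erase_add _ _ (Finset.mem_univ ν)]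
    rw [Finset.sum_eq_zero (fun k hk => by
      obtain ⟨hkν, -⟩ := Finset.mem_erase.mp hk
      rw [hSν0x k hkν]
      ring)]
    ring
  have hxi : xiF n hpos ε V H ν x =
      -(((n : ℝ) + 2) / (2 * ((n : ℝ) - 2))) * vE n hpos ε x *
          pder ν (vE n hpos ε) x * Smat V ν ν x ^ 2 +
        (4 * (n : ℝ) * ((n : ℝ) - 1) / ((n : ℝ) - 2) ^ 2) * (vE n hpos ε x)⁻¹ *
          pder ν (vE n hpos ε) x * psiF n hpos ε V x ^ 2 := by
    unfold xiF
    rw [hSum1, hSum2, hSum3, hSum4]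
    rw [hSnn x hx, hpsi x hx]
    have hvne : vE n hpos ε x ≠ 0 := ne_of_gt hv0
    field_simp
    ring
  refine ⟨hxi, ?_⟩
  rw [hxi]
  have hinv : 0 < (vE n hpos ε x)⁻¹ := inv_pos.mpr hv0
  have hc : 0 ≤ 4 * (n:ℝ) * ((n:ℝ)-1) / ((n:ℝ)-2)^2 := by
    apply div_nonneg (by nlinarith) (by positivity)
  have hB : (4 * (n : ℝ) * ((n : ℝ) - 1) / ((n : ℝ) - 2) ^ 2) * (vE n hpos ε x)⁻¹ *
      pder ν (vE n hpos ε) x * psiF n hpos ε V x ^ 2 ≤ 0 := by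
    have h1 : 0 ≤ (4 * (n : ℝ) * ((n : ℝ) - 1) / ((n : ℝ) - 2) ^ 2) * (vE n hpos ε x)⁻¹ *
        psiF n hpos ε V x ^ 2 :=
      mul_nonneg (mul_nonneg hc hinv.le) (sq_nonneg _)
    nlinarith [mul_nonpos_of_nonneg_of_nonpos h1 hdvneg.le]
  linarith

set_option maxHeartbeats 2000000 in
/-- Simplification of `ξₙ` on the boundary, together with the sign estimate used
in the energy estimate. -/
theorem xi_n_boundary (n : ℕ) (hn : 3 ≤ n) (ε : ℝ) (hε : 0 < ε)
    (V : E n → E n) (hV : ContDiff ℝ (⊤ : ℕ∞) V)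
    (H : Fin n → Fin n → E n → ℝ)
    (hHsymm : ∀ (i k : Fin n) (x : E n), H i k x = H k i x)
    (hHtr : ∀ x : E n, ∑ i, H i i x = 0)
    (hHn : ∀ (i : Fin n) (x : E n), H i (nIdx n (by omega)) x = 0)
    (hVn : ∀ x : E n, x (nIdx n (by omega)) = 0 → V x (nIdx n (by omega)) = 0)
    (hVa : ∀ (x : E n) (a : Fin n), a ≠ nIdx n (by omega) →
      x (nIdx n (by omega)) = 0 → pder (nIdx n (by omega)) (fun z => V z a) x = 0)
    (hSnn : ∀ x : E n, x (nIdx n (by omega)) = 0 →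
      pder (nIdx n (by omega)) (Smat V (nIdx n (by omega)) (nIdx n (by omega))) x =
        -(2 * (n : ℝ) / ((n : ℝ) - 2)) * (vE n (by omega) ε x)⁻¹ *
          pder (nIdx n (by omega)) (vE n (by omega) ε) x *
          Smat V (nIdx n (by omega)) (nIdx n (by omega)) x)
    (hSab : ∀ (a b : Fin n), a ≠ nIdx n (by omega) → b ≠ nIdx n (by omega) →
      ∀ x : E n, x (nIdx n (by omega)) = 0 →
        pder (nIdx n (by omega)) (Smat V a b) x =
          -(1 / ((n : ℝ) - 1)) *
            pder (nIdx n (by omega)) (Smat V (nIdx n (by omega)) (nIdx n (by omega))) x *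
            (if a = b then 1 else 0))
    (hpsi : ∀ x : E n, x (nIdx n (by omega)) = 0 →
      pder (nIdx n (by omega)) (psiF n (by omega) ε V) x =
        -(1 / (2 * ((n : ℝ) - 1))) * pder (nIdx n (by omega)) (vE n (by omega) ε) x *
            Smat V (nIdx n (by omega)) (nIdx n (by omega)) x +
          ((n : ℝ) / ((n : ℝ) - 2)) * (vE n (by omega) ε x)⁻¹ *
            pder (nIdx n (by omega)) (vE n (by omega) ε) x * psiF n (by omega) ε V x) :
    ∀ x : E n, x (nIdx n (by omega)) = 0 →
      xiF n (by omega) ε V H (nIdx n (by omega)) x =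
          -(((n : ℝ) + 2) / (2 * ((n : ℝ) - 2))) * vE n (by omega) ε x *
              pder (nIdx n (by omega)) (vE n (by omega) ε) x *
              Smat V (nIdx n (by omega)) (nIdx n (by omega)) x ^ 2 +
            (4 * (n : ℝ) * ((n : ℝ) - 1) / ((n : ℝ) - 2) ^ 2) * (vE n (by omega) ε x)⁻¹ *
              pder (nIdx n (by omega)) (vE n (by omega) ε) x * psiF n (by omega) ε V x ^ 2 ∧
      -xiF n (by omega) ε V H (nIdx n (by omega)) x ≥
          (((n : ℝ) + 2) / (2 * ((n : ℝ) - 2))) * vE n (by omega) ε x *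
            pder (nIdx n (by omega)) (vE n (by omega) ε) x *
            Smat V (nIdx n (by omega)) (nIdx n (by omega)) x ^ 2 := by
  exact fun x hx => xi_main n hn (by omega) ε hε V hV H hHsymm hHtr hHn hVn hVa hSnn hSab hpsi x hx
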